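/- Let G be a finite simple connected graph of order n ≥ 5 and size m. If G has a maximum matching M with |M| = k, then χ'_L(G) ≤ m − k + 1. -/

import Mathlib

open SimpleGraph

/-- Distance from a vertex to an edge: the minimum of the distances to the two endpoints. -/
noncomputable def edgeDist {V : Type*} (G : SimpleGraph V) (v : V) (e : Sym2 V) : ℕ :=
  Sym2.lift ⟨fun x y => min (G.dist v x) (G.dist v y), fun _ _ => min_comm _ _⟩ e

/-- Distance (in `ℕ∞`) from a vertex to the `i`-th color class of an edge coloring `c`
(it is `⊤` if the class is empty). -/
noncomputable def classDist {V : Type*} (G : SimpleGraph V) {k : ℕ} (c : Sym2 V → Fin k)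
    (v : V) (i : Fin k) : ℕ∞ :=
  ⨅ e ∈ {e | e ∈ G.edgeSet ∧ c e = i}, (edgeDist G v e : ℕ∞)

/-- `c` is an edge-locating `k`-coloring of `G`: it is a proper edge coloring (distinct edges
sharing an endpoint get different colors), and distinct vertices have distinct edge color codes
`(d(v, C_1), …, d(v, C_k))`. -/
def IsEdgeLocatingColoring {V : Type*} (G : SimpleGraph V) {k : ℕ} (c : Sym2 V → Fin k) : Prop :=
  (∀ e ∈ G.edgeSet, ∀ f ∈ G.edgeSet, e ≠ f → (∃ x, x ∈ e ∧ x ∈ f) → c e ≠ c f) ∧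
  (∀ u v : V, u ≠ v → ∃ i, classDist G c u i ≠ classDist G c v i)

/-- The edge-locating chromatic number `χ'_L(G)`: the least `k` such that `G` admits an
edge-locating `k`-coloring. -/
noncomputable def edgeLocatingChromaticNumber {V : Type*} (G : SimpleGraph V) : ℕ :=
  sInf {k | ∃ c : Sym2 V → Fin k, IsEdgeLocatingColoring G c}

/-- The join `G + H` of two graphs: all edges of `G`, all edges of `H`, and all edges between
a vertex of `G` and a vertex of `H`. -/
def graphJoin {α β : Type*} (G : SimpleGraph α) (H : SimpleGraph β) : SimpleGraph (α ⊕ β) :=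
  SimpleGraph.fromRel (fun x y =>
    (∃ a b, x = Sum.inl a ∧ y = Sum.inl b ∧ G.Adj a b) ∨
    (∃ a b, x = Sum.inr a ∧ y = Sum.inr b ∧ H.Adj a b) ∨
    (∃ a b, x = Sum.inl a ∧ y = Sum.inr b))

/-- A set `M` of edges of `G` forming a matching: pairwise vertex-disjoint edges of `G`. -/
def IsMatchingSet {V : Type*} (G : SimpleGraph V) (M : Set (Sym2 V)) : Prop :=
  M ⊆ G.edgeSet ∧ ∀ e ∈ M, ∀ f ∈ M, e ≠ f → ∀ x, x ∈ e → x ∉ f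


/-! ### Auxiliary lemmas for `stmt_12` -/

lemma edgeDist_mk' {V : Type*} (G : SimpleGraph V) (v x y : V) :
    edgeDist G v s(x,y) = min (G.dist v x) (G.dist v y) := rfl

lemma edgeDist_eq_zero_of_mem' {V : Type*} (G : SimpleGraph V) {v : V} {e : Sym2 V}
    (h : v ∈ e) : edgeDist G v e = 0 := by
  induction e using Sym2.ind with
  | _ x y =>
    rw [Sym2.mem_iff] at h
    rcases h with rfl | rfl <;> simp [edgeDist, SimpleGraph.dist_self]

lemma mem_of_edgeDist_eq_zero' {V : Type*} {G : SimpleGraph V} (hG : G.Connected) {v : V}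
    {e : Sym2 V} (h : edgeDist G v e = 0) : v ∈ e := by
  induction e using Sym2.ind with
  | _ x y =>
    rw [edgeDist_mk', Nat.min_eq_zero_iff, hG.dist_eq_zero_iff, hG.dist_eq_zero_iff] at h
    rw [Sym2.mem_iff]; exact h

lemma edgeDist_eq_one' {V : Type*} {G : SimpleGraph V} (hG : G.Connected) {a w x : V}
    (haw : G.Adj a w) (hax : a ≠ x) : edgeDist G a s(w,x) = 1 := by
  rw [edgeDist_mk']
  have h1 : G.dist a w = 1 := SimpleGraph.dist_eq_one_iff_adj.mpr haw
  have h2 : 1 ≤ G.dist a x := hG.pos_dist_of_ne hax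
  omega

lemma mem_of_walk_closed' {V : Type*} {G : SimpleGraph V} {S : Set V}
    (hcl : ∀ a ∈ S, ∀ b, G.Adj a b → b ∈ S) :
    ∀ {a b : V}, G.Walk a b → a ∈ S → b ∈ S := by
  intro a b p
  induction p with
  | nil => exact id
  | cons h q ih => intro ha; exact ih (hcl _ ha _ h)

lemma card_le_ncard_of_closed' {V : Type*} [Fintype V] {G : SimpleGraph V} (hG : G.Connected)
    {S : Set V} {u : V} (hu : u ∈ S)
    (hcl : ∀ a ∈ S, ∀ b, G.Adj a b → b ∈ S) : Fintype.card V ≤ S.ncard := by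
  have : S = Set.univ := Set.eq_univ_of_forall (fun x =>
    mem_of_walk_closed' hcl ((hG.preconnected u x).some) hu)
  rw [this, Set.ncard_univ, Nat.card_eq_fintype_card]

lemma min_eq_one'' {a b : ℕ} (h : min a b = 1) : a = 1 ∨ b = 1 := by omega

lemma final_contra' {V : Type*} [Fintype V] {G : SimpleGraph V} (hG : G.Connected)
    (hn5 : 5 ≤ Fintype.card V)
    {M : Set (Sym2 V)} (hM : IsMatchingSet G M)
    {u v w z : V}
    (H1 : ∀ e ∈ G.edgeSet \ M, edgeDist G u e = edgeDist G v e)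
    (hNu : ∀ x, G.Adj u x → x = v ∨ x = w)
    (hNv : ∀ x, G.Adj v x → x = u ∨ x = z)
    (huw : s(u,w) ∈ M) (hvz : s(v,z) ∈ M)
    (hwz : w ≠ z) : False := by
  have hadj_uw : G.Adj u w := hM.1 huw
  have hadj_vz : G.Adj v z := hM.1 hvz
  have huw' : u ≠ w := hadj_uw.ne
  have hvz' : v ≠ z := hadj_vz.ne
  set S : Set V := {u, v, w, z} with hS
  have hNw : ∀ x, G.Adj w x → x ∈ S := by
    intro x hwx
    by_contra hxS
    simp only [hS, Set.mem_insert_iff, Set.mem_singleton_iff, not_or] at hxS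
    obtain ⟨hxu, hxv, _, hxz⟩ := hxS
    have heN : s(w,x) ∈ G.edgeSet \ M := by
      refine ⟨hwx, fun hmem => ?_⟩
      by_cases hEq : s(w,x) = s(u,w)
      · rw [Sym2.eq_iff] at hEq
        rcases hEq with ⟨h1, _⟩ | ⟨_, h2⟩
        · exact huw' h1.symm
        · exact hxu h2
      · exact hM.2 _ hmem _ huw hEq w (by simp) (by simp)
    have h1 : edgeDist G u s(w,x) = 1 := edgeDist_eq_one' hG hadj_uw (Ne.symm hxu)
    have h2 : edgeDist G v s(w,x) = 1 := by rw [← H1 _ heN]; exact h1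
    rw [edgeDist_mk'] at h2
    rcases min_eq_one'' h2 with h | h
    · rcases hNv w (SimpleGraph.dist_eq_one_iff_adj.mp h) with h' | h'
      · exact huw' h'.symm
      · exact hwz h'
    · rcases hNv x (SimpleGraph.dist_eq_one_iff_adj.mp h) with h' | h'
      · exact hxu h'
      · exact hxz h'
  have hNz : ∀ x, G.Adj z x → x ∈ S := by
    intro x hzx
    by_contra hxS
    simp only [hS, Set.mem_insert_iff, Set.mem_singleton_iff, not_or] at hxS
    obtain ⟨hxu, hxv, hxw, _⟩ := hxS
    have heN : s(z,x) ∈ G.edgeSet \ M := by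
      refine ⟨hzx, fun hmem => ?_⟩
      by_cases hEq : s(z,x) = s(v,z)
      · rw [Sym2.eq_iff] at hEq
        rcases hEq with ⟨h1, _⟩ | ⟨_, h2⟩
        · exact hvz' h1.symm
        · exact hxv h2
      · exact hM.2 _ hmem _ hvz hEq z (by simp) (by simp)
    have h1 : edgeDist G v s(z,x) = 1 := edgeDist_eq_one' hG hadj_vz (Ne.symm hxv)
    have h2 : edgeDist G u s(z,x) = 1 := by rw [H1 _ heN]; exact h1
    rw [edgeDist_mk'] at h2
    rcases min_eq_one'' h2 with h | h
    · rcases hNu z (SimpleGraph.dist_eq_one_iff_adj.mp h) with h' | h'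
      · exact hvz' h'.symm
      · exact hwz h'.symm
    · rcases hNu x (SimpleGraph.dist_eq_one_iff_adj.mp h) with h' | h'
      · exact hxv h'
      · exact hxw h'
  have hcl : ∀ a ∈ S, ∀ b, G.Adj a b → b ∈ S := by
    intro a ha b hab
    simp only [hS, Set.mem_insert_iff, Set.mem_singleton_iff] at ha ⊢
    rcases ha with rfl | rfl | rfl | rfl
    · rcases hNu b hab with rfl | rfl <;> simp
    · rcases hNv b hab with rfl | rfl <;> simp
    · have := hNw b hab; simpa [hS] using this
    · have := hNz b hab; simpa [hS] using this
  have hcard : Fintype.card V ≤ S.ncard :=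
    card_le_ncard_of_closed' hG (show u ∈ S by simp [hS]) hcl
  have h4 : S.ncard ≤ 4 := by
    have e1 : ({z} : Set V).ncard = 1 := Set.ncard_singleton _
    have e2 : ({w, z} : Set V).ncard ≤ 2 := le_trans (Set.ncard_insert_le _ _) (by omega)
    have e3 : ({v, w, z} : Set V).ncard ≤ 3 := le_trans (Set.ncard_insert_le _ _) (by omega)
    exact le_trans (Set.ncard_insert_le _ _) (by omega)
  omega


/-- If a finite simple connected graph `G` of order `n ≥ 5` and size `m` has a maximum matching
`M` with `|M| = k`, then `χ'_L(G) ≤ m - k + 1`. -/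
theorem stmt_12 {V : Type*} [Fintype V] (G : SimpleGraph V) (hG : G.Connected)
    (n m k : ℕ) (hn : n = Fintype.card V) (hn5 : 5 ≤ n) (hm : m = G.edgeSet.ncard)
    (M : Set (Sym2 V)) (hM : IsMatchingSet G M) (hk : M.ncard = k)
    (hmax : ∀ M' : Set (Sym2 V), IsMatchingSet G M' → M'.ncard ≤ k) :
    edgeLocatingChromaticNumber G ≤ m - k + 1 := by
  classical
  subst hn hm
  subst hk
  by_contra hgoal
  -- It suffices to construct an edge-locating coloring with `m - k + 1` colors.
  apply hgoal
  set s : ℕ := G.edgeSet.ncard - M.ncard with hs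
  set N : Set (Sym2 V) := G.edgeSet \ M with hNdef
  have hNcard : N.ncard = s := by
    rw [hNdef, hs]; exact Set.ncard_diff hM.1 (Set.toFinite _)
  haveI : Fintype ↥N := (Set.toFinite N).fintype
  have hcardN : Fintype.card ↥N = s := by
    rw [← Nat.card_eq_fintype_card, Nat.card_coe_set_eq, hNcard]
  set ε : ↥N ≃ Fin s := Fintype.equivFinOfCardEq hcardN with hε
  set c : Sym2 V → Fin (s + 1) := fun e => if h : e ∈ N then Fin.succ (ε ⟨e, h⟩) else 0
    with hcdef
  have hc_mem : ∀ e (h : e ∈ N), c e = Fin.succ (ε ⟨e, h⟩) := fun e h => dif_pos h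
  have hc_not : ∀ e, e ∉ N → c e = 0 := fun e h => dif_neg h
  have hclass0 : {e | e ∈ G.edgeSet ∧ c e = 0} = M := by
    ext e
    simp only [Set.mem_setOf_eq]
    constructor
    · rintro ⟨he, hce⟩
      by_contra hM'
      rw [hc_mem e ⟨he, hM'⟩] at hce
      exact Fin.succ_ne_zero _ hce
    · intro he
      exact ⟨hM.1 he, hc_not e (fun h => h.2 he)⟩
  have hclassS : ∀ j : Fin s,
      {e | e ∈ G.edgeSet ∧ c e = Fin.succ j} = {(ε.symm j : Sym2 V)} := by
    intro j; ext e
    simp only [Set.mem_setOf_eq, Set.mem_singleton_iff]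
    constructor
    · rintro ⟨he, hce⟩
      by_cases h : e ∈ N
      · rw [hc_mem e h] at hce
        have h2 : ε ⟨e, h⟩ = j := Fin.succ_injective _ hce
        have h3 : (⟨e, h⟩ : ↥N) = ε.symm j := by rw [← h2, Equiv.symm_apply_apply]
        exact congrArg Subtype.val h3
      · rw [hc_not e h] at hce
        exact absurd hce.symm (Fin.succ_ne_zero _)
    · rintro rfl
      have hmem : (ε.symm j : Sym2 V) ∈ N := (ε.symm j).2
      refine ⟨hmem.1, ?_⟩
      rw [hc_mem _ hmem]
      congr 1
      rw [show (⟨(ε.symm j : Sym2 V), hmem⟩ : ↥N) = ε.symm j from Subtype.coe_eta _ _,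
        Equiv.apply_symm_apply]
  have hCD0 : ∀ x : V, classDist G c x 0 = ⨅ e ∈ M, (edgeDist G x e : ℕ∞) := by
    intro x; rw [classDist, hclass0]
  have hCDS : ∀ (x : V) (j : Fin s),
      classDist G c x (Fin.succ j) = (edgeDist G x (ε.symm j) : ℕ∞) := by
    intro x j; rw [classDist, hclassS j]; simp
  have hA : ∀ x : V, (∃ e ∈ M, x ∈ e) → classDist G c x 0 = 0 := by
    rintro x ⟨e, heM, hxe⟩
    rw [hCD0]
    refine le_antisymm (le_trans (iInf₂_le e heM) ?_) zero_le
    rw [edgeDist_eq_zero_of_mem' G hxe]; simp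
  have hB : ∀ x : V, (∀ e ∈ M, x ∉ e) → 1 ≤ classDist G c x 0 := by
    intro x hx
    rw [hCD0]
    refine le_iInf₂ fun e he => ?_
    have hne : edgeDist G x e ≠ 0 := fun h0 => hx e he (mem_of_edgeDist_eq_zero' hG h0)
    exact_mod_cast Nat.one_le_iff_ne_zero.mpr hne
  rw [edgeLocatingChromaticNumber]
  apply Nat.sInf_le
  refine ⟨c, ?_, ?_⟩
  · -- properness
    rintro e he f hf hef ⟨x, hxe, hxf⟩ hcc
    by_cases h1 : e ∈ N <;> by_cases h2 : f ∈ N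
    · rw [hc_mem e h1, hc_mem f h2] at hcc
      exact hef (congrArg Subtype.val (ε.injective (Fin.succ_injective _ hcc)))
    · rw [hc_mem e h1, hc_not f h2] at hcc
      exact Fin.succ_ne_zero _ hcc
    · rw [hc_not e h1, hc_mem f h2] at hcc
      exact Fin.succ_ne_zero _ hcc.symm
    · have heM : e ∈ M := by by_contra hh; exact h1 ⟨he, hh⟩
      have hfM : f ∈ M := by by_contra hh; exact h2 ⟨hf, hh⟩
      exact hM.2 e heM f hfM hef x hxe hxf
  · -- locating
    intro u v huv
    by_contra hcon
    push_neg at hcon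
    have H1 : ∀ e ∈ N, edgeDist G u e = edgeDist G v e := by
      intro e he
      have h := hcon (Fin.succ (ε ⟨e, he⟩))
      rw [hCDS u, hCDS v, Equiv.symm_apply_apply] at h
      exact_mod_cast h
    have H1' : ∀ e ∈ N, edgeDist G v e = edgeDist G u e := fun e he => (H1 e he).symm
    have hn5' : 5 ≤ Fintype.card V := hn5
    -- Step 1: every edge at `a` avoiding `b` must be a matching edge
    have step : ∀ a b : V, (∀ e ∈ N, edgeDist G a e = edgeDist G b e) →
        ∀ e ∈ G.edgeSet, a ∈ e → b ∉ e → e ∈ M := by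
      intro a b hab e he hae hbe
      by_contra hMe
      have hee := hab e ⟨he, hMe⟩
      rw [edgeDist_eq_zero_of_mem' G hae] at hee
      exact hbe (mem_of_edgeDist_eq_zero' hG hee.symm)
    -- Neighborhood structure: if `s(a,w')` is the matching edge at `a`,
    -- every neighbor of `a` is `b` or `w'`.
    have nbr : ∀ a b w' : V, b ≠ a → (∀ e ∈ N, edgeDist G a e = edgeDist G b e) →
        s(a, w') ∈ M → ∀ x, G.Adj a x → x = b ∨ x = w' := by
      intro a b w' hba hab hawM x hax
      by_cases hxb : x = b
      · exact Or.inl hxb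
      right
      have hbe : b ∉ s(a, x) := by
        rw [Sym2.mem_iff]; push_neg
        exact ⟨hba, fun h => hxb h.symm⟩
      have hmemM : s(a, x) ∈ M := step a b hab _ hax (Sym2.mem_mk_left _ _) hbe
      by_cases hEq : s(a, x) = s(a, w')
      · exact Sym2.congr_right.mp hEq
      · exact absurd (Sym2.mem_mk_left a w')
          (hM.2 _ hmemM _ hawM hEq a (Sym2.mem_mk_left _ _))
    by_cases hadjuv : G.Adj u v
    · by_cases huvM : s(u, v) ∈ M
      · -- the matching edge `uv`: then `{u,v}` is a closed set, contradiction with `n ≥ 5`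
        have hNu : ∀ x, G.Adj u x → x = v := by
          intro x hx
          rcases nbr u v v huv.symm H1 huvM x hx with h | h <;> exact h
        have hNv : ∀ x, G.Adj v x → x = u := by
          intro x hx
          rcases nbr v u u huv H1' (by rwa [Sym2.eq_swap]) x hx with h | h <;> exact h
        have hcl : ∀ a ∈ ({u, v} : Set V), ∀ b, G.Adj a b → b ∈ ({u, v} : Set V) := by
          intro a ha b hab
          simp only [Set.mem_insert_iff, Set.mem_singleton_iff] at ha ⊢
          rcases ha with rfl | rfl
          · exact Or.inr (hNu b hab)
          · exact Or.inl (hNv b hab)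
        have hcard : Fintype.card V ≤ ({u, v} : Set V).ncard :=
          card_le_ncard_of_closed' hG (show u ∈ ({u, v} : Set V) by simp) hcl
        have h2 : ({u, v} : Set V).ncard ≤ 2 := by
          have := Set.ncard_singleton v
          exact le_trans (Set.ncard_insert_le _ _) (by omega)
        omega
      · by_cases hu0 : ∃ e ∈ M, u ∈ e
        · by_cases hv0 : ∃ e ∈ M, v ∈ e
          · -- both saturated: apply the main structural contradiction
            obtain ⟨e, heM, hue⟩ := hu0
            obtain ⟨w, rfl⟩ := Sym2.mem_iff_exists.mp hue
            obtain ⟨f, hfM, hvf⟩ := hv0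
            obtain ⟨z, rfl⟩ := Sym2.mem_iff_exists.mp hvf
            have huw' : u ≠ w := (hM.1 heM).ne
            have hvz' : v ≠ z := (hM.1 hfM).ne
            have hwv : w ≠ v := by rintro rfl; exact huvM heM
            have hzu : z ≠ u := by
              rintro rfl
              exact huvM (by rwa [Sym2.eq_swap] at hfM)
            have hwz : w ≠ z := by
              rintro rfl
              have hne : s(u, w) ≠ s(v, w) := by
                rw [ne_eq, Sym2.eq_iff]
                push_neg
                exact ⟨fun h _ => huv h, fun h _ => huw' h⟩
              exact hM.2 _ heM _ hfM hne w (Sym2.mem_mk_right _ _) (Sym2.mem_mk_right _ _)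
            exact final_contra' hG hn5' hM H1
              (nbr u v w huv.symm H1 heM) (nbr v u z huv H1' hfM) heM hfM hwz
          · -- `u` saturated, `v` not: color class of `M` separates them
            push_neg at hv0
            have h0 := hcon 0
            rw [hA u hu0] at h0
            have h1 := hB v hv0
            rw [← h0] at h1
            simp at h1
        · by_cases hv0 : ∃ e ∈ M, v ∈ e
          · push_neg at hu0
            have h0 := hcon 0
            rw [hA v hv0] at h0
            have h1 := hB u hu0
            rw [h0] at h1
            simp at h1
          · -- neither saturated: `M ∪ {uv}` is a bigger matching
            push_neg at hu0 hv0
            have hnotM : s(u, v) ∉ M := fun h => hu0 _ h (Sym2.mem_mk_left _ _)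
            have hM' : IsMatchingSet G (insert s(u, v) M) := by
              constructor
              · rintro e he
                rcases Set.mem_insert_iff.mp he with rfl | heM
                · exact hadjuv
                · exact hM.1 heM
              · intro e he f hf hef x hxe hxf
                rcases Set.mem_insert_iff.mp he with rfl | heM <;>
                  rcases Set.mem_insert_iff.mp hf with rfl | hfM
                · exact hef rfl
                · rcases Sym2.mem_iff.mp hxe with rfl | rfl
                  · exact hu0 f hfM hxf
                  · exact hv0 f hfM hxf
                · rcases Sym2.mem_iff.mp hxf with rfl | rfl
                  · exact hu0 e heM hxe
                  · exact hv0 e heM hxe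
                · exact hM.2 e heM f hfM hef x hxe hxf
            have hle := hmax _ hM'
            rw [Set.ncard_insert_of_notMem hnotM (Set.toFinite _)] at hle
            omega
    · -- `u` and `v` not adjacent
      have hnbru : ∃ w, G.Adj u w := by
        obtain ⟨p⟩ := hG.preconnected u v
        cases p with
        | nil => exact absurd rfl huv
        | cons h _ => exact ⟨_, h⟩
      have hnbrv : ∃ z, G.Adj v z := by
        obtain ⟨p⟩ := hG.preconnected v u
        cases p with
        | nil => exact absurd rfl (Ne.symm huv)
        | cons h _ => exact ⟨_, h⟩
      obtain ⟨w, hadj_uw⟩ := hnbru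
      obtain ⟨z, hadj_vz⟩ := hnbrv
      have hwv : w ≠ v := by rintro rfl; exact hadjuv hadj_uw
      have hzu : z ≠ u := by rintro rfl; exact hadjuv hadj_vz.symm
      have heM : s(u, w) ∈ M := by
        refine step u v H1 _ hadj_uw (Sym2.mem_mk_left _ _) ?_
        rw [Sym2.mem_iff]; push_neg
        exact ⟨Ne.symm huv, Ne.symm hwv⟩
      have hfM : s(v, z) ∈ M := by
        refine step v u H1' _ hadj_vz (Sym2.mem_mk_left _ _) ?_
        rw [Sym2.mem_iff]; push_neg
        exact ⟨huv, Ne.symm hzu⟩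
      have huw' : u ≠ w := hadj_uw.ne
      have hwz : w ≠ z := by
        rintro rfl
        have hne : s(u, w) ≠ s(v, w) := by
          rw [ne_eq, Sym2.eq_iff]
          push_neg
          exact ⟨fun h _ => huv h, fun h _ => huw' h⟩
        exact hM.2 _ heM _ hfM hne w (Sym2.mem_mk_right _ _) (Sym2.mem_mk_right _ _)
      exact final_contra' hG hn5' hM H1
        (nbr u v w huv.symm H1 heM) (nbr v u z huv H1' hfM) heM hfM hwz
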